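/- Differentiability of the smoothed dual: let S ⊆ ℝᴺ be nonempty, compact and convex, b : S → ℝ concave and continuous, and d : S → ℝ strongly convex with parameter σ > 0 and continuous. For c > 0 define ḡ(λ) = max_{s ∈ S} [ b(s) − λᵀs − c·d(s) ] and let s(λ) denote the unique maximizer. Then ḡ is convex and differentiable on ℝᴺ with gradient ∇ḡ(λ) = −s(λ). -/

import Mathlib

/-!
With `h = b - c • d` and `s λ` the maximizer, the value function `g λ = h (s λ) - ⟪λ, s λ⟫` is
the pointwise maximum over `x ∈ S` of the affine functions `λ ↦ h x - ⟪λ, x⟫`, hence convex.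
Comparing the maximizers at `λ` and `μ` squeezes `g μ - g λ + ⟪μ - λ, s λ⟫` between `0` and
`⟪μ - λ, s λ - s μ⟫`, which is `o(‖μ - λ‖)` as soon as `s` is continuous at `λ`. Since `h` is
`cσ`-strongly concave, the objective grows quadratically away from its maximizer, and this makes
`s` Lipschitz with constant `2 / (cσ)`.
-/

open RealInnerProductSpace Set Filter Topology Asymptotics

section StrongConvexity

variable {E : Type*} [NormedAddCommGroup E] [InnerProductSpace ℝ E]
  {s : Set E} {f g : E → ℝ} {m : ℝ}

lemma StrongConvexOn.const_smul (hf : StrongConvexOn s m f) {c : ℝ} (hc : 0 ≤ c) :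
    StrongConvexOn s (c * m) (c • f) := by
  refine ⟨hf.1, fun x hx y hy a b ha hb hab => ?_⟩
  have := mul_le_mul_of_nonneg_left (hf.2 hx hy ha hb hab) hc
  simp only [Pi.smul_apply, smul_eq_mul] at this ⊢
  linarith

lemma ConcaveOn.sub_strongConvexOn (hf : ConcaveOn ℝ s f) (hg : StrongConvexOn s m g) :
    StrongConcaveOn s m (f - g) := by
  simpa [StrongConcaveOn] using hf.uniformConcaveOn_zero.sub hg

lemma StrongConcaveOn.sub_convexOn (hf : StrongConcaveOn s m f) (hg : ConvexOn ℝ s g) :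
    StrongConcaveOn s m (f - g) := by
  simpa [StrongConcaveOn] using hf.sub hg.uniformConvexOn_zero

lemma StrongConcaveOn.sub_inner (hf : StrongConcaveOn s m f) (lam : E) :
    StrongConcaveOn s m fun x => f x - ⟪lam, x⟫ :=
  hf.sub_convexOn ((innerₛₗ ℝ lam).convexOn hf.1)

lemma StrongConcaveOn.mul_sq_norm_sub_le_of_isMaxOn (hf : StrongConcaveOn s m f)
    {x₀ x : E} (hx₀ : x₀ ∈ s) (hx : x ∈ s) (hmax : IsMaxOn f s x₀) :
    m / 4 * ‖x - x₀‖ ^ 2 ≤ f x₀ - f x := by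
  have hmid := hf.2 hx hx₀ one_half_pos.le one_half_pos.le (add_halves 1)
  have hle := hmax (hf.1 hx hx₀ one_half_pos.le one_half_pos.le (add_halves 1))
  simp only [smul_eq_mul, mem_ofPred_eq] at hmid hle
  linarith

end StrongConvexity

section ValueFunction

variable {E : Type*} [NormedAddCommGroup E] [InnerProductSpace ℝ E]
  {S : Set E} {h : E → ℝ} {smax : E → E}

lemma convexOn_univ_of_isMaxOn_sub_inner (hsmem : ∀ lam, smax lam ∈ S)
    (hsmax : ∀ lam, IsMaxOn (fun s => h s - ⟪lam, s⟫) S (smax lam)) :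
    ConvexOn ℝ univ fun lam => h (smax lam) - ⟪lam, smax lam⟫ := by
  refine ⟨convex_univ, fun x _ y _ a b ha hb hab => ?_⟩
  set z := smax (a • x + b • y)
  have hx : h z - ⟪x, z⟫ ≤ h (smax x) - ⟪x, smax x⟫ := hsmax x (hsmem _)
  have hy : h z - ⟪y, z⟫ ≤ h (smax y) - ⟪y, smax y⟫ := hsmax y (hsmem _)
  simp only [smul_eq_mul, inner_add_left, real_inner_smul_left]
  calc h z - (a * ⟪x, z⟫ + b * ⟪y, z⟫) = a * (h z - ⟪x, z⟫) + b * (h z - ⟪y, z⟫) := by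
        linear_combination (-h z) * hab
    _ ≤ a * (h (smax x) - ⟪x, smax x⟫) + b * (h (smax y) - ⟪y, smax y⟫) := by gcongr

lemma hasGradientAt_of_isMaxOn_sub_inner [CompleteSpace E] (hsmem : ∀ lam, smax lam ∈ S)
    (hsmax : ∀ lam, IsMaxOn (fun s => h s - ⟪lam, s⟫) S (smax lam)) {lam : E}
    (hcont : ContinuousAt smax lam) :
    HasGradientAt (fun lam => h (smax lam) - ⟪lam, smax lam⟫) (-smax lam) lam := by
  rw [hasGradientAt_iff_isLittleO]
  have hbound : ∀ mu, |h (smax mu) - ⟪mu, smax mu⟫ - (h (smax lam) - ⟪lam, smax lam⟫)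
      - ⟪-smax lam, mu - lam⟫| ≤ ‖smax mu - smax lam‖ * ‖mu - lam‖ := by
    intro mu
    have lower : h (smax lam) - ⟪mu, smax lam⟫ ≤ h (smax mu) - ⟪mu, smax mu⟫ :=
      hsmax mu (hsmem lam)
    have upper : h (smax mu) - ⟪lam, smax mu⟫ ≤ h (smax lam) - ⟪lam, smax lam⟫ :=
      hsmax lam (hsmem mu)
    have hcs : ⟪mu - lam, smax lam - smax mu⟫ ≤ ‖smax mu - smax lam‖ * ‖mu - lam‖ := by
      rw [norm_sub_rev, mul_comm]; exact real_inner_le_norm _ _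
    simp only [inner_neg_left, inner_sub_left, inner_sub_right] at hcs ⊢
    rw [abs_le]
    constructor <;> linarith [real_inner_comm lam (smax lam), real_inner_comm mu (smax lam)]
  have hsmall : (fun mu => ‖smax mu - smax lam‖ * ‖mu - lam‖) =o[𝓝 lam] fun mu => mu - lam := by
    have hto : (fun mu => ‖smax mu - smax lam‖) =o[𝓝 lam] fun _ => (1 : ℝ) :=
      (isLittleO_one_iff ℝ).mpr (tendsto_iff_norm_sub_tendsto_zero.mp hcont)
    simpa [isLittleO_norm_right] using hto.mul_isBigO (isBigO_refl (fun mu => ‖mu - lam‖) _)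
  exact (isBigO_of_le _ fun mu => (hbound mu).trans (Real.le_norm_self _)).trans_isLittleO hsmall

lemma StrongConcaveOn.lipschitzWith_of_isMaxOn_sub_inner {m : ℝ} (hh : StrongConcaveOn S m h)
    (hm : 0 < m) (hsmem : ∀ lam, smax lam ∈ S)
    (hsmax : ∀ lam, IsMaxOn (fun s => h s - ⟪lam, s⟫) S (smax lam)) :
    LipschitzWith (2 / m).toNNReal smax := by
  refine .of_dist_le' fun mu lam => ?_
  rw [dist_eq_norm, dist_eq_norm]
  have hlam := (hh.sub_inner lam).mul_sq_norm_sub_le_of_isMaxOn (hsmem lam) (hsmem mu) (hsmax lam)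
  have hmu := (hh.sub_inner mu).mul_sq_norm_sub_le_of_isMaxOn (hsmem mu) (hsmem lam) (hsmax mu)
  rw [norm_sub_rev] at hmu
  -- summing the two growth bounds cancels `h` and leaves a monotonicity inequality
  have hmono : m / 2 * ‖smax mu - smax lam‖ ^ 2 ≤ ‖mu - lam‖ * ‖smax mu - smax lam‖ := by
    have hcs := real_inner_le_norm (mu - lam) (smax lam - smax mu)
    rw [norm_sub_rev (smax lam)] at hcs
    simp only [inner_sub_left, inner_sub_right] at hcs
    linarith
  rcases (norm_nonneg (smax mu - smax lam)).eq_or_lt with h0 | hpos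
  · rw [← h0]; positivity
  · have : m / 2 * ‖smax mu - smax lam‖ ≤ ‖mu - lam‖ :=
      le_of_mul_le_mul_right (by linarith) hpos
    rw [div_mul_eq_mul_div, le_div_iff₀ hm]
    linarith

end ValueFunction

theorem smoothed_dual_differentiable_general (N : ℕ) (S : Set (EuclideanSpace ℝ (Fin N)))
    (b d : EuclideanSpace ℝ (Fin N) → ℝ)
    (hb : ConcaveOn ℝ S b)
    (σ : ℝ) (hσ : 0 < σ) (hd : StrongConvexOn S σ d)
    (c : ℝ) (hc : 0 < c)
    (smax : EuclideanSpace ℝ (Fin N) → EuclideanSpace ℝ (Fin N))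
    (hsmem : ∀ lam, smax lam ∈ S)
    (hsmax : ∀ lam, IsMaxOn (fun s => b s - ⟪lam, s⟫ - c * d s) S (smax lam)) :
    ConvexOn ℝ Set.univ
        (fun lam => b (smax lam) - ⟪lam, smax lam⟫ - c * d (smax lam)) ∧
    ∀ lam, HasGradientAt
        (fun lam => b (smax lam) - ⟪lam, smax lam⟫ - c * d (smax lam))
        (-(smax lam)) lam := by
  have hconc : StrongConcaveOn S (c * σ) (b - c • d) := hb.sub_strongConvexOn (hd.const_smul hc.le)
  have hsmax' : ∀ lam, IsMaxOn (fun s => (b - c • d) s - ⟪lam, s⟫) S (smax lam) := by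
    intro lam
    convert hsmax lam using 2 with s
    simp only [Pi.sub_apply, Pi.smul_apply, smul_eq_mul]
    ring
  have hvalue : (fun lam => b (smax lam) - ⟪lam, smax lam⟫ - c * d (smax lam)) =
      fun lam => (b - c • d) (smax lam) - ⟪lam, smax lam⟫ := by
    funext lam
    simp only [Pi.sub_apply, Pi.smul_apply, smul_eq_mul]
    ring
  have hcont := (hconc.lipschitzWith_of_isMaxOn_sub_inner (mul_pos hc hσ) hsmem hsmax').continuous
  rw [hvalue]
  exact ⟨convexOn_univ_of_isMaxOn_sub_inner hsmem hsmax',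
    fun lam => hasGradientAt_of_isMaxOn_sub_inner hsmem hsmax' hcont.continuousAt⟩

theorem smoothed_dual_differentiable (N : ℕ) (S : Set (EuclideanSpace ℝ (Fin N)))
    (hSne : S.Nonempty) (hScpt : IsCompact S) (hScvx : Convex ℝ S)
    (b d : EuclideanSpace ℝ (Fin N) → ℝ)
    (hb : ConcaveOn ℝ S b) (hbc : ContinuousOn b S)
    (σ : ℝ) (hσ : 0 < σ) (hd : StrongConvexOn S σ d) (hdc : ContinuousOn d S)
    (c : ℝ) (hc : 0 < c)
    (smax : EuclideanSpace ℝ (Fin N) → EuclideanSpace ℝ (Fin N))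
    (hsmem : ∀ lam, smax lam ∈ S)
    (hsmax : ∀ lam, IsMaxOn (fun s => b s - ⟪lam, s⟫ - c * d s) S (smax lam)) :
    ConvexOn ℝ Set.univ
        (fun lam => b (smax lam) - ⟪lam, smax lam⟫ - c * d (smax lam)) ∧
    ∀ lam, HasGradientAt
        (fun lam => b (smax lam) - ⟪lam, smax lam⟫ - c * d (smax lam))
        (-(smax lam)) lam :=
  smoothed_dual_differentiable_general N S b d hb σ hσ hd c hc smax hsmem hsmax
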